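/- arXiv:1506.03938 — 3 statements merged into one kernel-verified Lean document; each statement's English description precedes it below -/
import Mathlib

section
/- The ratio of curvature to torsion of the W-direction curve equals the geodesic curvature of the principal image of the principal normal indicatrix of β: κ̄/τ̄ = (κ²/(κ²+τ²)^{3/2})·(τ/κ)′ (up to sign). -/
open Real
open scoped RealInnerProductSpace

noncomputable abbrev E3 := EuclideanSpace ℝ (Fin 3)

noncomputable def cross3 (u v : E3) : E3 :=
  (WithLp.equiv 2 (Fin 3 → ℝ)).symm
    (crossProduct ((WithLp.equiv 2 (Fin 3 → ℝ)) u) ((WithLp.equiv 2 (Fin 3 → ℝ)) v))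

noncomputable def det3 (u v w : E3) : ℝ :=
  Matrix.det (Matrix.of ![(WithLp.equiv 2 (Fin 3 → ℝ)) u,
    (WithLp.equiv 2 (Fin 3 → ℝ)) v, (WithLp.equiv 2 (Fin 3 → ℝ)) w])

/-- `κ̄/τ̄` equals (up to sign) the geodesic curvature `δ` of the principal image of
the principal normal indicatrix of `β`. -/
theorem wdirection_curvature_ratio_eq_delta
    (κ τ : ℝ → ℝ)
    (hκ : ∀ s, 0 < κ s) (hκd : ContDiff ℝ (⊤ : ℕ∞) κ) (hτd : ContDiff ℝ (⊤ : ℕ∞) τ) :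
    ∀ s,
      (|τ s * deriv κ s - deriv τ s * κ s| / (κ s ^ 2 + τ s ^ 2)) /
          Real.sqrt (κ s ^ 2 + τ s ^ 2) =
        |κ s ^ 2 / (κ s ^ 2 + τ s ^ 2) ^ ((3 : ℝ) / 2) *
          deriv (fun u => τ u / κ u) s| := by
  intro s
  have hκs := hκ s
  have hκ0 : κ s ≠ 0 := ne_of_gt hκs
  have hτdiff : DifferentiableAt ℝ τ s := (hτd.differentiable (by simp)) s
  have hκdiff : DifferentiableAt ℝ κ s := (hκd.differentiable (by simp)) s
  have hd : deriv (fun u => τ u / κ u) s =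
      (deriv τ s * κ s - τ s * deriv κ s) / κ s ^ 2 :=
    deriv_div hτdiff hκdiff hκ0
  have hsum : 0 < κ s ^ 2 + τ s ^ 2 := by positivity
  have hrpow : (κ s ^ 2 + τ s ^ 2) ^ ((3 : ℝ) / 2) =
      (κ s ^ 2 + τ s ^ 2) * Real.sqrt (κ s ^ 2 + τ s ^ 2) := by
    rw [Real.sqrt_eq_rpow, ← Real.rpow_one_add' (by positivity) (by norm_num)]
    norm_num
  rw [hd, hrpow]
  rw [abs_mul, abs_div, abs_div, abs_of_pos (by positivity : (0:ℝ) < κ s ^ 2),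
    abs_of_pos (by positivity : (0:ℝ) < (κ s ^ 2 + τ s ^ 2) * Real.sqrt (κ s ^ 2 + τ s ^ 2)),
    show |deriv τ s * κ s - τ s * deriv κ s| = |τ s * deriv κ s - deriv τ s * κ s| by
      rw [← abs_neg]; ring_nf]
  field_simp
end

section
/- The W-direction curve β̄ of β is a general helix (i.e., κ̄/τ̄ is constant) if and only if β is a slant helix (i.e., δ = (κ²/(κ²+τ²)^{3/2})·(τ/κ)′ is constant), provided β̄ is not itself degenerate. -/
open Real
open scoped RealInnerProductSpace

/-- If `β` is not a general helix, its W-direction curve `β̄` is a general helix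
(`κ̄/τ̄` constant) iff `β` is a slant helix (`δ` constant). -/
theorem wdirection_general_helix_iff_slant_helix
    (κ τ : ℝ → ℝ)
    (hκ : ∀ s, 0 < κ s) (hκd : ContDiff ℝ (⊤ : ℕ∞) κ) (hτd : ContDiff ℝ (⊤ : ℕ∞) τ)
    (hnot : ¬ ∃ c : ℝ, ∀ s, τ s / κ s = c) :
    (∃ c : ℝ, ∀ s,
        (|τ s * deriv κ s - deriv τ s * κ s| / (κ s ^ 2 + τ s ^ 2)) /
          Real.sqrt (κ s ^ 2 + τ s ^ 2) = c) ↔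
    (∃ c : ℝ, ∀ s,
        κ s ^ 2 / (κ s ^ 2 + τ s ^ 2) ^ ((3 : ℝ) / 2) *
          deriv (fun u => τ u / κ u) s = c) := by
  set A : ℝ → ℝ := fun s => κ s ^ 2 + τ s ^ 2 with hA
  have hApos : ∀ s, 0 < A s := fun s => by
    have := hκ s; simp only [hA]; positivity
  set δ : ℝ → ℝ := fun s =>
    (deriv τ s * κ s - τ s * deriv κ s) / A s ^ ((3 : ℝ) / 2) with hδ
  have hApow : ∀ s, 0 < A s ^ ((3 : ℝ) / 2) := fun s =>
    Real.rpow_pos_of_pos (hApos s) _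
  -- rewrite RHS expression as δ
  have hrhs : ∀ s, κ s ^ 2 / A s ^ ((3 : ℝ) / 2) *
      deriv (fun u => τ u / κ u) s = δ s := by
    intro s
    have hder : deriv (fun u => τ u / κ u) s =
        (deriv τ s * κ s - τ s * deriv κ s) / κ s ^ 2 := by
      exact deriv_div (hτd.differentiable (by simp) s)
        (hκd.differentiable (by simp) s) (hκ s).ne'
    rw [hder, hδ, div_mul_div_comm, mul_comm (κ s ^ 2),
      mul_div_mul_right _ _ (pow_ne_zero 2 (hκ s).ne')]
  -- rewrite LHS expression as |δ|
  have hlhs : ∀ s, (|τ s * deriv κ s - deriv τ s * κ s| / A s) /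
      Real.sqrt (A s) = |δ s| := by
    intro s
    have h1 : Real.sqrt (A s) = A s ^ ((1 : ℝ) / 2) :=
      Real.sqrt_eq_rpow (A s)
    have h2 : A s * A s ^ ((1 : ℝ) / 2) = A s ^ ((3 : ℝ) / 2) := by
      rw [show (3 : ℝ) / 2 = 1 + 1 / 2 by norm_num,
        Real.rpow_add (hApos s), Real.rpow_one]
    rw [hδ, abs_div, abs_of_pos (hApow s), abs_sub_comm, div_div, h1, h2]
  -- continuity of δ
  have hδc : Continuous δ := by
    have hAc : Continuous A := by
      exact ((hκd.continuous.pow 2).add (hτd.continuous.pow 2))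
    have hnum : Continuous fun s => deriv τ s * κ s - τ s * deriv κ s :=
      ((hτd.continuous_deriv (by simp)).mul hκd.continuous).sub
        (hτd.continuous.mul (hκd.continuous_deriv (by simp)))
    exact hnum.div (hAc.rpow_const fun s => Or.inl (hApos s).ne')
      fun s => (hApow s).ne'
  constructor
  · rintro ⟨c, hc⟩
    simp only [hA] at hlhs; simp only [hlhs] at hc
    refine ⟨δ 0, fun s => ?_⟩
    rw [hrhs]
    by_contra hne
    have h0 : δ 0 ≠ 0 := by
      intro h
      have := hc s
      rw [← hc 0, h, abs_zero, abs_eq_zero] at this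
      exact hne (this.trans h.symm)
    have hval : δ s = -δ 0 := by
      have := (hc s).trans (hc 0).symm
      rcases abs_eq_abs.mp this with h | h
      · exact absurd h hne
      · exact h
    have hmem : (0 : ℝ) ∈ Set.uIcc (δ 0) (δ s) := by
      rw [hval]
      rcases le_or_gt 0 (δ 0) with h | h
      · exact Set.mem_uIcc.mpr (Or.inr ⟨by linarith, h⟩)
      · exact Set.mem_uIcc.mpr (Or.inl ⟨h.le, by linarith⟩)
    obtain ⟨t, _, ht⟩ := intermediate_value_uIcc (hδc.continuousOn) hmem
    have := hc t
    rw [ht, abs_zero, ← hc 0] at this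
    exact h0 (abs_eq_zero.mp this.symm)
  · rintro ⟨c, hc⟩
    exact ⟨|c|, fun s => by rw [hlhs, ← hc s, hrhs]⟩
end

section
/- If β is a slant helix, then the tangent indicatrix of the W-direction curve of β is a planar curve (its torsion vanishes identically). -/
open Real
open scoped RealInnerProductSpace

/-- If `β` is a slant helix (`δ = κ̄/τ̄` constant), then the tangent indicatrix of the
W-direction curve of `β` is planar: its torsion vanishes identically. -/
theorem slant_helix_tangent_indicatrix_planar
    (κ τ κb τb : ℝ → ℝ)
    (hκ : ∀ s, 0 < κ s)
    (hreg : ∀ s, τ s * deriv κ s - deriv τ s * κ s ≠ 0)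
    (hκb : ∀ s, κb s = |τ s * deriv κ s - deriv τ s * κ s| / (κ s ^ 2 + τ s ^ 2))
    (hτb : ∀ s, τb s = Real.sqrt (κ s ^ 2 + τ s ^ 2))
    -- β is a slant helix: δ = κ̄/τ̄ is constant
    (hslant : ∃ c : ℝ, ∀ s, κb s / τb s = c) :
    -- the torsion of the tangent indicatrix α = T̄ vanishes
    ∀ s, (τb s * deriv κb s - deriv τb s * κb s) /
        (κb s * (κb s ^ 2 + τb s ^ 2)) = 0 := by
  obtain ⟨c, hc⟩ := hslant
  have hτbpos : ∀ s, 0 < τb s := by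
    intro s
    rw [hτb s]
    have := hκ s
    exact Real.sqrt_pos.mpr (by positivity)
  have hκbeq : κb = fun s => c * τb s := by
    funext s
    have h := hc s
    rw [div_eq_iff (hτbpos s).ne'] at h
    exact h
  intro s
  have : deriv κb s = c * deriv τb s := by
    rw [hκbeq, deriv_const_mul_field]
  rw [this, hκbeq]
  ring_nf
end
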